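/- arXiv:1901.08922 — 6 statements merged into one kernel-verified Lean document; each statement's English description precedes it below -/
import Mathlib

section
/- For any sequence (d_k) with d_{-k} = d_k, det(d_{j-k})_{j,k=1}^{2N} = det(d_{j-k} - d_{j+k-1})_{j,k=1}^{N} · det(d_{j-k} + d_{j+k-1})_{j,k=1}^{N}. -/
/-!
Listing the first `N` indices of the `2N × 2N` Toeplitz matrix in reverse order turns it, thanks
to `d (-k) = d k`, into the block matrix `[[T, H], [H, T]]` with `T` the `N × N` Toeplitz and `H`
the `N × N` Hankel matrix `(d (j + k + 1))`. Block elimination then gives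
`det [[A, B], [B, A]] = det (A + B) * det (A - B)`.
-/

open Matrix

namespace Matrix

variable {n R : Type*} [Fintype n] [DecidableEq n] [CommRing R]

theorem det_fromBlocks_self_swap (A B : Matrix n n R) :
    det (fromBlocks A B B A) = det (A + B) * det (A - B) := by
  have hconj : fromBlocks 1 0 (-1) 1 * fromBlocks A B B A * fromBlocks 1 0 1 1 =
      fromBlocks (A + B) B 0 (A - B) := by
    simp only [fromBlocks_multiply]
    congr 1 <;> simp only [Matrix.one_mul, Matrix.mul_one, Matrix.zero_mul, Matrix.mul_zero,
      Matrix.neg_mul, add_zero] <;> abel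
  simpa [det_fromBlocks_zero₁₂, det_fromBlocks_zero₂₁] using congrArg det hconj

end Matrix

theorem Fin.intCast_val_rev {n : ℕ} (i : Fin n) : ((i.rev : ℕ) : ℤ) = n - 1 - i := by
  have := i.is_lt
  rw [Fin.val_rev]
  omega

def finSumFinReflect (N : ℕ) : Fin N ⊕ Fin N ≃ Fin (2 * N) :=
  (Equiv.sumCongr Fin.revPerm (Equiv.refl _)).trans
    (finSumFinEquiv.trans (finCongr (two_mul N).symm))

theorem submatrix_finSumFinReflect_toeplitz {α : Type*} (N : ℕ) (d : ℤ → α)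
    (hd : ∀ k : ℤ, d (-k) = d k) :
    (of fun j k : Fin (2 * N) => d ((j : ℤ) - k)).submatrix
        (finSumFinReflect N) (finSumFinReflect N) =
      let T : Matrix (Fin N) (Fin N) α := of fun j k => d ((j : ℤ) - k)
      let H : Matrix (Fin N) (Fin N) α := of fun j k => d ((j : ℤ) + k + 1)
      fromBlocks T H H T := by
  ext (j | j) (k | k) <;>
    simp only [finSumFinReflect, Equiv.coe_trans, submatrix_apply, Function.comp_apply,
      Equiv.sumCongr_apply, Equiv.coe_refl, Sum.map_inl, Sum.map_inr, id_eq, Fin.revPerm_apply,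
      finSumFinEquiv_apply_left, finSumFinEquiv_apply_right, finCongr_apply, of_apply,
      Fin.val_cast, Fin.val_castAdd, Fin.natAdd_eq_addNat, Fin.val_addNat,
      fromBlocks_apply₁₁, fromBlocks_apply₁₂, fromBlocks_apply₂₁, fromBlocks_apply₂₂,
      Fin.intCast_val_rev, Nat.cast_add]
  · rw [← hd]; congr 1; ring
  · rw [← hd]; congr 1; ring
  · congr 1; ring
  · congr 1; ring

theorem toeplitz_factorization_even (N : ℕ) (d : ℤ → ℂ) (hd : ∀ k : ℤ, d (-k) = d k) :
    det (of fun j k : Fin (2 * N) => d ((j : ℤ) - (k : ℤ))) =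
      det (of fun j k : Fin N =>
          d ((j : ℤ) - (k : ℤ)) - d ((j : ℤ) + (k : ℤ) + 1)) *
        det (of fun j k : Fin N =>
          d ((j : ℤ) - (k : ℤ)) + d ((j : ℤ) + (k : ℤ) + 1)) := by
  rw [← det_submatrix_equiv_self (finSumFinReflect N), submatrix_finSumFinReflect_toeplitz N d hd,
    det_fromBlocks_self_swap, mul_comm]
  rfl
end

section
/- For any sequence (d_k) with d_{-k}=d_k, 2·det(d_{j-k})_{j,k=1}^{2N-1} = det(d_{j-k}-d_{j+k-1})_{j,k=1}^{N-1}·det(d_{j-k}+d_{j+k-1})_{j,k=1}^{N} + det(d_{j-k}-d_{j+k-1})_{j,k=1}^{N}·det(d_{j-k}+d_{j+k-1})_{j,k=1}^{N-1}. -/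
open Matrix

private lemma d_congr (d : ℤ → ℂ) {x y : ℤ} (h : x = y) : d x = d y := by rw [h]

private lemma d_symm (d : ℤ → ℂ) (hd : ∀ k : ℤ, d (-k) = d k) {x y : ℤ} (h : x = -y) :
    d x = d y := by rw [h, hd]

private lemma detSplit {m : Type*} [DecidableEq m] [Fintype m] (X Y : Matrix m m ℂ) :
    det (fromBlocks X Y Y X) = det (X - Y) * det (X + Y) := by
  have h : fromBlocks X Y Y X * fromBlocks (1 : Matrix m m ℂ) 1 0 1
      = fromBlocks (1 : Matrix m m ℂ) 1 0 1 * fromBlocks (X - Y) 0 Y (X + Y) := by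
    rw [fromBlocks_multiply, fromBlocks_multiply]
    ext (i | i) (j | j) <;>
      simp [Matrix.add_apply, Matrix.sub_apply, Matrix.mul_apply] <;> ring
  have h2 := congrArg det h
  rw [det_mul, det_mul, det_fromBlocks_zero₂₁, det_fromBlocks_zero₁₂, det_one] at h2
  simpa using h2

private lemma updRow_comm {ι : Type*} [DecidableEq ι] [Fintype ι] (M : Matrix ι ι ℂ)
    {i j : ι} (h : i ≠ j) (u v : ι → ℂ) :
    updateRow (updateRow M i u) j v = updateRow (updateRow M j v) i u := by
  ext a b
  by_cases hj : a = j <;> by_cases hi : a = i <;>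
    simp_all [updateRow_apply]

private lemma det_upd_add_single {ι : Type*} [DecidableEq ι] [Fintype ι]
    (M : Matrix ι ι ℂ) (i : ι) (t : ℂ) :
    det (updateRow M i (M i + t • (Pi.single i 1 : ι → ℂ))) =
      det M + t * det (updateRow M i (Pi.single i 1 : ι → ℂ)) := by
  rw [det_updateRow_add, updateRow_eq_self, det_updateRow_smul]

private lemma det_minor_last (n : ℕ) (G : Matrix (Fin (n + 1)) (Fin (n + 1)) ℂ) :
    det (updateRow G (Fin.last n) (Pi.single (Fin.last n) 1)) =
      det (of fun j k : Fin n => G j.castSucc k.castSucc) := by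
  rw [← det_submatrix_equiv_self finSumFinEquiv]
  have hb : (updateRow G (Fin.last n) (Pi.single (Fin.last n) (1:ℂ))).submatrix
        finSumFinEquiv finSumFinEquiv
      = fromBlocks (of fun j k : Fin n => G j.castSucc k.castSucc)
          (of fun (j : Fin n) (_ : Fin 1) => G j.castSucc (Fin.last n)) 0
          (of fun _ _ => 1) := by
    ext x y
    rcases x with ⟨i, hi⟩ | ⟨i, hi⟩ <;> rcases y with ⟨j, hj⟩ | ⟨j, hj⟩
    · simp [updateRow_apply, Pi.single_apply, Fin.ext_iff, Fin.castSucc, Fin.castAdd,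
        Fin.castLE, Fin.last, Fin.natAdd, Nat.ne_of_lt hi, Nat.ne_of_lt hj]
    · obtain rfl : j = 0 := by omega
      simp [updateRow_apply, Pi.single_apply, Fin.ext_iff, Fin.castSucc, Fin.castAdd,
        Fin.castLE, Fin.last, Fin.natAdd, Nat.ne_of_lt hi]
    · obtain rfl : i = 0 := by omega
      simp [updateRow_apply, Pi.single_apply, Fin.ext_iff, Fin.castSucc, Fin.castAdd,
        Fin.castLE, Fin.last, Fin.natAdd, Nat.ne_of_lt hj]
    · obtain rfl : i = 0 := by omega
      obtain rfl : j = 0 := by omega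
      simp [updateRow_apply, Pi.single_apply, Fin.ext_iff, Fin.castSucc, Fin.castAdd,
        Fin.castLE, Fin.last, Fin.natAdd]
  rw [hb, det_fromBlocks_zero₂₁]
  simp

private def myEquiv (n : ℕ) : (Fin (2 * n + 1) ⊕ Fin 1) ≃ (Fin (n + 1) ⊕ Fin (n + 1)) where
  toFun x :=
    match x with
    | .inl a => if h : (a : ℕ) < n then .inl ⟨n - 1 - a, by omega⟩ else .inr ⟨a - n, by omega⟩
    | .inr _ => .inl ⟨n, by omega⟩
  invFun y :=
    match y with
    | .inl b => if h : (b : ℕ) < n then .inl ⟨n - 1 - b, by omega⟩ else .inr 0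
    | .inr c => .inl ⟨(c : ℕ) + n, by omega⟩
  left_inv := by
    rintro (⟨a, ha⟩ | ⟨a, ha⟩) <;> (try dsimp only) <;> (try split_ifs) <;>
        (try dsimp only) <;> (try split_ifs) <;>
      first
        | (exfalso; omega)
        | (simp only [Sum.inl.injEq, Sum.inr.injEq, Fin.ext_iff, Fin.val_zero, Fin.mk_zero];
            omega)
  right_inv := by
    rintro (⟨b, hb⟩ | ⟨c, hc⟩) <;> (try dsimp only) <;> (try split_ifs) <;>
        (try dsimp only) <;> (try split_ifs) <;>
      first
        | (exfalso; omega)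
        | (simp only [Sum.inl.injEq, Sum.inr.injEq, Fin.ext_iff, Fin.val_zero, Fin.mk_zero];
            omega)

private def Am (n : ℕ) (d : ℤ → ℂ) : Matrix (Fin (n + 1)) (Fin (n + 1)) ℂ :=
  of fun j k => d ((j : ℤ) - (k : ℤ))

private def Bm (n : ℕ) (d : ℤ → ℂ) : Matrix (Fin (n + 1)) (Fin (n + 1)) ℂ :=
  of fun j k => d ((j : ℤ) + (k : ℤ) + 1)

private def M0 (n : ℕ) (d : ℤ → ℂ) :
    Matrix (Fin (n + 1) ⊕ Fin (n + 1)) (Fin (n + 1) ⊕ Fin (n + 1)) ℂ :=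
  fromBlocks (Am n d) (Bm n d) (Bm n d) (Am n d)

private def ll (n : ℕ) : Fin (n + 1) ⊕ Fin (n + 1) := Sum.inl (Fin.last n)
private def rr (n : ℕ) : Fin (n + 1) ⊕ Fin (n + 1) := Sum.inr (Fin.last n)

private def R1 (n : ℕ) (d : ℤ → ℂ) := updateRow (M0 n d) (ll n) (Pi.single (ll n) 1)
private def R2 (n : ℕ) (d : ℤ → ℂ) := updateRow (M0 n d) (rr n) (Pi.single (rr n) 1)
private def R12 (n : ℕ) (d : ℤ → ℂ) := updateRow (R1 n d) (rr n) (Pi.single (rr n) 1)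

private def Mt (n : ℕ) (d : ℤ → ℂ) (t : ℂ) :=
  updateRow (updateRow (M0 n d) (ll n)
      (M0 n d (ll n) + t • (Pi.single (ll n) 1 : Fin (n + 1) ⊕ Fin (n + 1) → ℂ))) (rr n)
    (M0 n d (rr n) + t • (Pi.single (rr n) 1 : Fin (n + 1) ⊕ Fin (n + 1) → ℂ))

private def Xt (n : ℕ) (d : ℤ → ℂ) (t : ℂ) : Matrix (Fin (n + 1)) (Fin (n + 1)) ℂ :=
  updateRow (Am n d) (Fin.last n)
    (Am n d (Fin.last n) + t • (Pi.single (Fin.last n) 1 : Fin (n + 1) → ℂ))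

private lemma hlr (n : ℕ) : ll n ≠ rr n := by simp [ll, rr]

private lemma exp1 (n : ℕ) (d : ℤ → ℂ) (t : ℂ) :
    det (Mt n d t) =
      det (M0 n d) + t * det (R1 n d) + t * (det (R2 n d) + t * det (R12 n d)) := by
  have e1 : (updateRow (M0 n d) (ll n) (M0 n d (ll n) + t • (Pi.single (ll n) 1 : _ → ℂ)))
      (rr n) = M0 n d (rr n) := updateRow_ne (Ne.symm (hlr n))
  unfold Mt
  rw [← e1, det_upd_add_single, det_upd_add_single]
  rw [show updateRow (M0 n d) (ll n) (Pi.single (ll n) 1) = R1 n d from rfl]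
  rw [updRow_comm _ (hlr n)]
  rw [show updateRow (M0 n d) (rr n) (Pi.single (rr n) 1) = R2 n d from rfl]
  rw [show M0 n d (ll n) = R2 n d (ll n) from (updateRow_ne (hlr n)).symm]
  rw [det_upd_add_single (R2 n d) (ll n) t]
  rw [show updateRow (R2 n d) (ll n) (Pi.single (ll n) 1) = R12 n d from by
    unfold R12 R1 R2; exact (updRow_comm _ (hlr n) _ _).symm]

private lemma hblocks (n : ℕ) (d : ℤ → ℂ) (t : ℂ) :
    Mt n d t = fromBlocks (Xt n d t) (Bm n d) (Bm n d) (Xt n d t) := by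
  ext x y
  rcases x with i | i <;> rcases y with j | j <;>
    by_cases hi : i = Fin.last n <;>
      simp [Mt, Xt, M0, updateRow_apply, Pi.single_apply, hi, ll, rr,
        Sum.inl.injEq, Sum.inr.injEq]

private lemma plusform (n : ℕ) (d : ℤ → ℂ) (t : ℂ) :
    Xt n d t + Bm n d = updateRow (Am n d + Bm n d) (Fin.last n)
      ((Am n d + Bm n d) (Fin.last n) + t • (Pi.single (Fin.last n) 1 : Fin (n + 1) → ℂ)) := by
  ext i j
  by_cases hi : i = Fin.last n <;>
    simp [Xt, updateRow_apply, hi, Matrix.add_apply, Pi.single_apply] <;> ring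

private lemma minusform (n : ℕ) (d : ℤ → ℂ) (t : ℂ) :
    Xt n d t - Bm n d = updateRow (Am n d - Bm n d) (Fin.last n)
      ((Am n d - Bm n d) (Fin.last n) + t • (Pi.single (Fin.last n) 1 : Fin (n + 1) → ℂ)) := by
  ext i j
  by_cases hi : i = Fin.last n <;>
    simp [Xt, updateRow_apply, hi, Matrix.sub_apply, Pi.single_apply] <;> ring

private lemma hPdet (n : ℕ) (d : ℤ → ℂ) (t : ℂ) :
    det (Xt n d t + Bm n d) =
      det (of fun j k : Fin (n + 1) => d ((j : ℤ) - (k : ℤ)) + d ((j : ℤ) + (k : ℤ) + 1)) +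
        t * det (of fun j k : Fin n =>
          d ((j : ℤ) - (k : ℤ)) + d ((j : ℤ) + (k : ℤ) + 1)) := by
  have h1 : Am n d + Bm n d
      = (of fun j k : Fin (n + 1) => d ((j : ℤ) - (k : ℤ)) + d ((j : ℤ) + (k : ℤ) + 1)) := by
    ext j k; simp [Am, Bm, Matrix.add_apply]
  have h2 : (of fun j k : Fin n =>
      (of fun j k : Fin (n + 1) =>
        d ((j : ℤ) - (k : ℤ)) + d ((j : ℤ) + (k : ℤ) + 1)) j.castSucc k.castSucc)
      = (of fun j k : Fin n =>
        d ((j : ℤ) - (k : ℤ)) + d ((j : ℤ) + (k : ℤ) + 1)) := by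
    ext j k; simp
  rw [plusform, h1, det_upd_add_single, det_minor_last, h2]

private lemma hQdet (n : ℕ) (d : ℤ → ℂ) (t : ℂ) :
    det (Xt n d t - Bm n d) =
      det (of fun j k : Fin (n + 1) => d ((j : ℤ) - (k : ℤ)) - d ((j : ℤ) + (k : ℤ) + 1)) +
        t * det (of fun j k : Fin n =>
          d ((j : ℤ) - (k : ℤ)) - d ((j : ℤ) + (k : ℤ) + 1)) := by
  have h1 : Am n d - Bm n d
      = (of fun j k : Fin (n + 1) => d ((j : ℤ) - (k : ℤ)) - d ((j : ℤ) + (k : ℤ) + 1)) := by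
    ext j k; simp [Am, Bm, Matrix.sub_apply]
  have h2 : (of fun j k : Fin n =>
      (of fun j k : Fin (n + 1) =>
        d ((j : ℤ) - (k : ℤ)) - d ((j : ℤ) + (k : ℤ) + 1)) j.castSucc k.castSucc)
      = (of fun j k : Fin n =>
        d ((j : ℤ) - (k : ℤ)) - d ((j : ℤ) + (k : ℤ) + 1)) := by
    ext j k; simp
  rw [minusform, h1, det_upd_add_single, det_minor_last, h2]

private lemma detR1 (n : ℕ) (d : ℤ → ℂ) (hd : ∀ k : ℤ, d (-k) = d k) :
    det (R1 n d) = det (of fun j k : Fin (2 * n + 1) => d ((j : ℤ) - (k : ℤ))) := by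
  have hsub : (R1 n d).submatrix (myEquiv n) (myEquiv n)
      = fromBlocks (of fun j k : Fin (2 * n + 1) => d ((j : ℤ) - (k : ℤ)))
          (of fun (j : Fin (2 * n + 1)) (_ : Fin 1) => d ((j : ℤ) + 1)) 0
          (of fun _ _ => 1) := by
    ext x y
    rcases x with ⟨a, ha⟩ | ⟨a, ha⟩ <;> rcases y with ⟨b, hb⟩ | ⟨b, hb⟩ <;>
        dsimp only [Matrix.submatrix_apply, myEquiv, Equiv.coe_fn_mk] <;>
        (try split_ifs) <;>
        simp only [R1, M0, Am, Bm, ll, rr, Matrix.updateRow_apply, Matrix.of_apply,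
          Matrix.fromBlocks_apply₁₁, Matrix.fromBlocks_apply₁₂, Matrix.fromBlocks_apply₂₁,
          Matrix.fromBlocks_apply₂₂, Pi.single_apply, Sum.inl.injEq, Sum.inr.injEq,
          Fin.ext_iff, Fin.val_last, Matrix.zero_apply, Fin.val_mk] <;>
        (try split_ifs) <;>
      first
        | rfl
        | contradiction
        | omega
        | (exfalso; omega)
        | (exact d_congr d (by omega))
        | (exact d_symm d hd (by omega))
  have h := det_submatrix_equiv_self (myEquiv n) (R1 n d)
  rw [hsub, det_fromBlocks_zero₂₁] at h
  rw [← h]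
  have hD : det (of fun _ _ : Fin 1 => (1:ℂ)) = 1 := by
    rw [det_fin_one]; rfl
  rw [hD, mul_one]

private lemma detR2 (n : ℕ) (d : ℤ → ℂ) : det (R2 n d) = det (R1 n d) := by
  have hsub : (R2 n d).submatrix (Equiv.sumComm (Fin (n + 1)) (Fin (n + 1)))
      (Equiv.sumComm (Fin (n + 1)) (Fin (n + 1))) = R1 n d := by
    ext x y
    rcases x with i | i <;> rcases y with j | j <;>
      simp [R1, R2, M0, ll, rr, updateRow_apply, Pi.single_apply,
        Sum.inl.injEq, Sum.inr.injEq]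
  rw [← hsub, det_submatrix_equiv_self]

theorem toeplitz_aux (n : ℕ) (d : ℤ → ℂ) (hd : ∀ k : ℤ, d (-k) = d k) :
    2 * det (of fun j k : Fin (2 * n + 1) => d ((j : ℤ) - (k : ℤ))) =
      det (of fun j k : Fin n =>
          d ((j : ℤ) - (k : ℤ)) - d ((j : ℤ) + (k : ℤ) + 1)) *
        det (of fun j k : Fin (n + 1) =>
          d ((j : ℤ) - (k : ℤ)) + d ((j : ℤ) + (k : ℤ) + 1)) +
      det (of fun j k : Fin (n + 1) =>
          d ((j : ℤ) - (k : ℤ)) - d ((j : ℤ) + (k : ℤ) + 1)) *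
        det (of fun j k : Fin n =>
          d ((j : ℤ) - (k : ℤ)) + d ((j : ℤ) + (k : ℤ) + 1)) := by
  have E1 := exp1 n d 1
  have E2 := exp1 n d (-1)
  have F1 : det (Mt n d 1)
      = (det (of fun j k : Fin (n + 1) =>
            d ((j : ℤ) - (k : ℤ)) - d ((j : ℤ) + (k : ℤ) + 1)) +
          (1:ℂ) * det (of fun j k : Fin n =>
            d ((j : ℤ) - (k : ℤ)) - d ((j : ℤ) + (k : ℤ) + 1))) *
        (det (of fun j k : Fin (n + 1) =>
            d ((j : ℤ) - (k : ℤ)) + d ((j : ℤ) + (k : ℤ) + 1)) +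
          (1:ℂ) * det (of fun j k : Fin n =>
            d ((j : ℤ) - (k : ℤ)) + d ((j : ℤ) + (k : ℤ) + 1))) := by
    rw [hblocks, detSplit, hQdet, hPdet]
  have F2 : det (Mt n d (-1))
      = (det (of fun j k : Fin (n + 1) =>
            d ((j : ℤ) - (k : ℤ)) - d ((j : ℤ) + (k : ℤ) + 1)) +
          (-1:ℂ) * det (of fun j k : Fin n =>
            d ((j : ℤ) - (k : ℤ)) - d ((j : ℤ) + (k : ℤ) + 1))) *
        (det (of fun j k : Fin (n + 1) =>
            d ((j : ℤ) - (k : ℤ)) + d ((j : ℤ) + (k : ℤ) + 1)) +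
          (-1:ℂ) * det (of fun j k : Fin n =>
            d ((j : ℤ) - (k : ℤ)) + d ((j : ℤ) + (k : ℤ) + 1))) := by
    rw [hblocks, detSplit, hQdet, hPdet]
  rw [detR2 n d, detR1 n d hd] at E1 E2
  linear_combination (F1 + E2 - E1 - F2) / 2

theorem toeplitz_expansion_odd (N : ℕ) (d : ℤ → ℂ) (hd : ∀ k : ℤ, d (-k) = d k) :
    2 * det (of fun j k : Fin (2 * N - 1) => d ((j : ℤ) - (k : ℤ))) =
      det (of fun j k : Fin (N - 1) =>
          d ((j : ℤ) - (k : ℤ)) - d ((j : ℤ) + (k : ℤ) + 1)) *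
        det (of fun j k : Fin N =>
          d ((j : ℤ) - (k : ℤ)) + d ((j : ℤ) + (k : ℤ) + 1)) +
      det (of fun j k : Fin N =>
          d ((j : ℤ) - (k : ℤ)) - d ((j : ℤ) + (k : ℤ) + 1)) *
        det (of fun j k : Fin (N - 1) =>
          d ((j : ℤ) - (k : ℤ)) + d ((j : ℤ) + (k : ℤ) + 1)) := by
  cases N with
  | zero =>
      haveI : IsEmpty (Fin (2 * 0 - 1)) := ⟨fun x => x.elim0⟩
      norm_num [Matrix.det_isEmpty]
  | succ n =>
      exact toeplitz_aux n d hd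
end

section
/- (Andréief identity) For functions g_1,…,g_N and h_1,…,h_N on a measure space (X,σ), (1/N!)·∫_{X^N} det(g_j(x_k))·det(h_j(x_k)) ∏ dσ(x_k) = det(∫_X g_j(x)h_k(x) dσ(x))_{j,k=1}^N, whenever both sides are well-defined. -/
/-!
Expanding both determinants by the Leibniz formula writes the integrand as a double sum over
permutations `π, τ` of `sign π * sign τ * ∏ₖ g (π k) (x k) * h (τ k) (x k)`. Each summand factorises
over the coordinates, so by Fubini it integrates to `sign π * sign τ * ∏ₖ ⟨g (π k), h (τ k)⟩`.
For fixed `π`, reindexing `τ ↦ τ * π⁻¹` turns the inner sum into the Leibniz expansion of the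
Gram determinant, so the double sum is `N!` times that determinant.
-/

open Matrix MeasureTheory Equiv

namespace Matrix

variable {n R : Type*} [Fintype n] [DecidableEq n] [CommRing R]

theorem det_mul_det_eq_sum_sum_perm (A B : Matrix n n R) :
    A.det * B.det = ∑ π : Perm n, ∑ τ : Perm n,
      ((Perm.sign π : ℤ) : R) * ((Perm.sign τ : ℤ) : R) * ∏ k, A (π k) k * B (τ k) k := by
  rw [det_apply', det_apply', Finset.sum_mul_sum]
  refine Finset.sum_congr rfl fun π _ => Finset.sum_congr rfl fun τ _ => ?_
  rw [Finset.prod_mul_distrib]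
  ring

theorem sum_perm_sign_mul_prod_eq_det (M : Matrix n n R) (π : Perm n) :
    ∑ τ : Perm n, ((Perm.sign π : ℤ) : R) * ((Perm.sign τ : ℤ) : R) * ∏ k, M (π k) (τ k)
      = M.det := by
  rw [← det_transpose, det_apply']
  refine Fintype.sum_equiv (Equiv.mulRight π⁻¹) _ _ fun τ => ?_
  have hprod : ∏ k, M (π k) (τ k) = ∏ j, M j ((τ * π⁻¹) j) := by
    rw [← Equiv.prod_comp π (fun j => M j ((τ * π⁻¹) j))]
    simp [Perm.mul_apply]
  have hsign : ((Perm.sign π : ℤ) : R) * ((Perm.sign τ : ℤ) : R)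
      = ((Perm.sign (τ * π⁻¹) : ℤ) : R) := by
    rw [Perm.sign_mul, Perm.sign_inv]
    push_cast
    ring
  simp only [Equiv.coe_mulRight, transpose_apply, hprod, hsign]

theorem sum_sum_perm_sign_mul_prod_eq_factorial_mul_det (M : Matrix n n R) :
    ∑ π : Perm n, ∑ τ : Perm n,
      ((Perm.sign π : ℤ) : R) * ((Perm.sign τ : ℤ) : R) * ∏ k, M (π k) (τ k)
      = ((Fintype.card n).factorial : R) * M.det := by
  simp only [sum_perm_sign_mul_prod_eq_det, Finset.sum_const, Finset.card_univ,
    Fintype.card_perm, nsmul_eq_mul]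

end Matrix

theorem MeasureTheory.integral_det_mul_det {𝕜 X ι : Type*} [RCLike 𝕜] [Fintype ι]
    [DecidableEq ι] [MeasurableSpace X] (σ : Measure X) [SigmaFinite σ] (g h : ι → X → 𝕜)
    (hgh : ∀ j k, Integrable (fun x => g j x * h k x) σ) :
    ∫ x : ι → X, det (of fun j k => g j (x k)) * det (of fun j k => h j (x k))
        ∂(Measure.pi fun _ => σ)
      = ((Fintype.card ι).factorial : 𝕜) * det (of fun j k => ∫ x, g j x * h k x ∂σ) := by
  have hterm : ∀ π τ : Perm ι, Integrable (fun x : ι → X =>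
      ((Perm.sign π : ℤ) : 𝕜) * ((Perm.sign τ : ℤ) : 𝕜) * ∏ k, g (π k) (x k) * h (τ k) (x k))
      (Measure.pi fun _ => σ) := fun π τ =>
    (Integrable.fintype_prod (f := fun k x => g (π k) x * h (τ k) x)
      fun k => hgh (π k) (τ k)).const_mul _
  simp only [det_mul_det_eq_sum_sum_perm, of_apply]
  rw [← sum_sum_perm_sign_mul_prod_eq_factorial_mul_det,
    integral_finsetSum _ fun π _ => integrable_finsetSum _ fun τ _ => hterm π τ]
  refine Finset.sum_congr rfl fun π _ => ?_
  rw [integral_finsetSum _ fun τ _ => hterm π τ]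
  refine Finset.sum_congr rfl fun τ _ => ?_
  simp only [integral_const_mul, of_apply]
  exact congrArg _ (integral_fintype_prod_eq_prod (fun k x => g (π k) x * h (τ k) x))

theorem andreief_identity_general {X : Type*} [MeasurableSpace X] (σ : Measure X) [SigmaFinite σ]
    (N : ℕ) (g h : Fin N → X → ℂ)
    (hgh : ∀ j k, Integrable (fun x => g j x * h k x) σ) :
    (1 / (Nat.factorial N : ℂ)) *
      ∫ x : Fin N → X,
        det (of fun j k : Fin N => g j (x k)) * det (of fun j k : Fin N => h j (x k))
          ∂(Measure.pi fun _ => σ) =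
    det (of fun j k : Fin N => ∫ x, g j x * h k x ∂σ) := by
  rw [integral_det_mul_det σ g h hgh, Fintype.card_fin, ← mul_assoc, one_div,
    inv_mul_cancel₀ (Nat.cast_ne_zero.mpr N.factorial_ne_zero), one_mul]

theorem andreief_identity {X : Type*} [MeasurableSpace X] (σ : Measure X) [SigmaFinite σ]
    (N : ℕ) (g h : Fin N → X → ℂ)
    (hg : ∀ j, Integrable (g j) σ) (hh : ∀ j, Integrable (h j) σ)
    (hgh : ∀ j k, Integrable (fun x => g j x * h k x) σ)
    (hint : Integrable
      (fun x : Fin N → X =>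
        det (of fun j k : Fin N => g j (x k)) * det (of fun j k : Fin N => h j (x k)))
      (Measure.pi fun _ => σ)) :
    (1 / (Nat.factorial N : ℂ)) *
      ∫ x : Fin N → X,
        det (of fun j k : Fin N => g j (x k)) * det (of fun j k : Fin N => h j (x k))
          ∂(Measure.pi fun _ => σ) =
    det (of fun j k : Fin N => ∫ x, g j x * h k x ∂σ) :=
  andreief_identity_general σ N g h hgh
end

section
/- The Toeplitz determinant det(q^{(j-k)^2/2})_{j,k=1}^N equals ∏_{j=1}^{N-1} (1 - q^j)^{N-j}. -/
open Matrix Finset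

lemma aux_count {M : Type*} [CommMonoid M] (g : ℕ → M) (N : ℕ) :
    ∏ j ∈ Finset.range N, ∏ i ∈ Finset.range j, g (i+1) = ∏ d ∈ Finset.Icc 1 (N-1), g d ^ (N-d) := by
  induction N with
  | zero => simp
  | succ N ih =>
    rw [Finset.prod_range_succ, ih]
    have h1 : ∏ i ∈ Finset.range N, g (i+1) = ∏ d ∈ Finset.Icc 1 N, g d := by
      rw [show Finset.Icc 1 N = Finset.Ico 1 (N+1) by rw [Finset.Ico_add_one_right_eq_Icc],
        Finset.prod_Ico_eq_prod_range]
      simp [Nat.add_comm]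
    have h2 : ∏ d ∈ Finset.Icc 1 N, g d ^ (N+1-d) =
        (∏ d ∈ Finset.Icc 1 N, g d ^ (N-d)) * ∏ d ∈ Finset.Icc 1 N, g d := by
      rw [← Finset.prod_mul_distrib]
      apply Finset.prod_congr rfl
      intro d hd
      rw [← pow_succ]
      congr 1
      have := (Finset.mem_Icc.mp hd).2
      omega
    have h3 : ∏ d ∈ Finset.Icc 1 N, g d ^ (N-d) = ∏ d ∈ Finset.Icc 1 (N-1), g d ^ (N-d) := by
      rcases Nat.eq_zero_or_pos N with rfl | hN
      · simp
      · rw [show N = (N-1)+1 by omega, Finset.prod_Icc_succ_top (by omega)]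
        simp [show (N-1)+1 = N by omega]
    rw [h1, Nat.add_sub_cancel, h2, h3]

lemma aux_reflect {M : Type*} [CommMonoid M] (g : ℕ → M) (j : ℕ) :
    ∏ i ∈ Finset.range j, g (j - i) = ∏ i ∈ Finset.range j, g (i+1) := by
  rw [← Finset.prod_range_reflect]
  apply Finset.prod_congr rfl
  intro i hi
  congr 1
  have := Finset.mem_range.mp hi
  omega

theorem theta_toeplitz_det {F : Type*} [Field F] (N : ℕ) (t : F) :
    det (of fun j k : Fin N => t ^ ((((j : ℤ) - (k : ℤ)) ^ 2).toNat)) =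
      ∏ j ∈ Finset.Icc 1 (N - 1), (1 - t ^ (2 * j)) ^ (N - j) := by
  rcases eq_or_ne t 0 with rfl | ht
  · have hM : (of fun j k : Fin N => (0:F) ^ ((((j : ℤ) - (k : ℤ)) ^ 2).toNat)) = 1 := by
      ext j k
      rcases eq_or_ne j k with rfl | h
      · simp [Matrix.one_apply]
      · have hjk : (j:ℤ) ≠ (k:ℤ) := fun hh => h (Fin.ext (by exact_mod_cast hh))
        have hsub : (j:ℤ) - (k:ℤ) ≠ 0 := sub_ne_zero.mpr hjk
        have hexp : ((((j : ℤ) - (k : ℤ)) ^ 2).toNat) ≠ 0 := by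
          rw [Ne, Int.toNat_eq_zero, not_le]
          positivity
        simp [Matrix.one_apply, h, zero_pow hexp]
    rw [hM, det_one]
    symm
    apply Finset.prod_eq_one
    intro j hj
    have h1 : 1 ≤ j := (Finset.mem_Icc.mp hj).1
    rw [zero_pow (by omega : 2*j ≠ 0)]
    simp
  · set c : Fin N → F := fun j => t ^ ((j:ℤ)^2) with hc
    set u : Fin N → F := fun j => t ^ (-2*(j:ℤ)) with hu
    have hentry : ∀ j k : Fin N, t ^ ((((j : ℤ) - (k : ℤ)) ^ 2).toNat) =
        c j * ((of fun j k : Fin N => c k * vandermonde u j k) j k) := by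
      intro j k
      simp only [of_apply, vandermonde_apply, hc, hu]
      rw [← zpow_natCast t, Int.toNat_of_nonneg (sq_nonneg _),
        ← zpow_natCast (t ^ (-2*(j:ℤ))) (k:ℕ), ← _root_.zpow_mul, ← zpow_add₀ ht, ← zpow_add₀ ht]
      congr 1
      ring
    have h1 : det (of fun j k : Fin N => t ^ ((((j : ℤ) - (k : ℤ)) ^ 2).toNat)) =
        (∏ j, c j) * ((∏ j, c j) * det (vandermonde u)) := by
      rw [show (of fun j k : Fin N => t ^ ((((j : ℤ) - (k : ℤ)) ^ 2).toNat)) =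
          of (fun j k => c j * ((of fun j k : Fin N => c k * vandermonde u j k) j k)) from by
        ext j k; exact hentry j k]
      rw [det_mul_column, det_mul_row]
    rw [h1, det_vandermonde]
    have h2 : ∏ i : Fin N, ∏ j ∈ Finset.Ioi i, (u j - u i) =
        ∏ j : Fin N, ∏ i ∈ Finset.Iio j, (u j - u i) :=
      Finset.prod_comm' (by simp)
    have h3 : ∀ j : Fin N, ∏ i ∈ Finset.Iio j, (u j - u i) =
        (u j)^(j:ℕ) * ∏ i ∈ Finset.Iio j, (1 - t ^ (2*((j:ℕ) - (i:ℕ)))) := by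
      intro j
      calc ∏ i ∈ Finset.Iio j, (u j - u i)
          = ∏ i ∈ Finset.Iio j, (u j * (1 - t ^ (2*((j:ℕ) - (i:ℕ))))) := by
            apply Finset.prod_congr rfl
            intro i hi
            have hij : (i:ℕ) < (j:ℕ) := Fin.lt_def.mp (Finset.mem_Iio.mp hi)
            rw [mul_sub, mul_one]
            congr 1
            rw [hu]
            rw [← zpow_natCast t (2*((j:ℕ)-(i:ℕ))), ← zpow_add₀ ht]
            show t ^ (-2 * ((i:ℕ):ℤ)) = _
            congr 1
            omega
        _ = (∏ _i ∈ Finset.Iio j, u j) * ∏ i ∈ Finset.Iio j, (1 - t ^ (2*((j:ℕ) - (i:ℕ)))) :=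
            Finset.prod_mul_distrib
        _ = (u j)^(j:ℕ) * ∏ i ∈ Finset.Iio j, (1 - t ^ (2*((j:ℕ) - (i:ℕ)))) := by
            rw [Finset.prod_const, Fin.card_Iio]
    rw [h2, Finset.prod_congr rfl (fun j _ => h3 j), Finset.prod_mul_distrib]
    have hcancel : (∏ j, c j) * ((∏ j, c j) * (∏ j : Fin N, (u j)^(j:ℕ))) = 1 := by
      rw [← Finset.prod_mul_distrib, ← Finset.prod_mul_distrib]
      apply Finset.prod_eq_one
      intro j _
      rw [hc, hu]
      rw [← zpow_natCast (t ^ (-2*(j:ℤ))) (j:ℕ), ← _root_.zpow_mul, ← zpow_add₀ ht,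
        ← zpow_add₀ ht, ← zpow_zero t]
      congr 1
      ring
    rw [show (∏ j, c j) * ((∏ j, c j) *
        ((∏ j : Fin N, (u j)^(j:ℕ)) * ∏ j : Fin N, ∏ i ∈ Finset.Iio j, (1 - t ^ (2*((j:ℕ) - (i:ℕ))))))
        = ((∏ j, c j) * ((∏ j, c j) * (∏ j : Fin N, (u j)^(j:ℕ)))) *
          ∏ j : Fin N, ∏ i ∈ Finset.Iio j, (1 - t ^ (2*((j:ℕ) - (i:ℕ)))) by ring,
      hcancel, one_mul]
    have h5 : ∀ j : Fin N, ∏ i ∈ Finset.Iio j, (1 - t ^ (2*((j:ℕ) - (i:ℕ)))) =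
        ∏ i ∈ Finset.range (j:ℕ), (1 - t ^ (2*((j:ℕ) - i))) := by
      intro j
      rw [← Nat.Iio_eq_range, ← Fin.map_valEmbedding_Iio, Finset.prod_map]
      rfl
    rw [Finset.prod_congr rfl (fun j _ => h5 j)]
    rw [Fin.prod_univ_eq_prod_range (fun j => ∏ i ∈ Finset.range j, (1 - t ^ (2*(j - i)))) N]
    have h6 : ∀ j ∈ Finset.range N, ∏ i ∈ Finset.range j, (1 - t ^ (2*(j - i))) =
        ∏ i ∈ Finset.range j, (1 - t ^ (2*(i+1))) := by
      intro j _
      have := aux_reflect (fun d => 1 - t ^ (2*d)) j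
      simpa using this
    rw [Finset.prod_congr rfl h6, aux_count (fun d => 1 - t ^ (2*d)) N]
end

section
/- The determinant det(q^{(j-k)^2/2} - q^{(j+k)^2/2})_{j,k=1}^N equals q^{∑_{j=1}^N j^2} · det(q^{-jk} - q^{jk})_{j,k=1}^N, and the latter determinant factorizes as ∏_{1≤j<k≤N}(q^{-j} - q^{-k})(1 - q^{-j-k}) · ∏_{j=1}^N (q^{-2j} - 1) q^{jN}. -/
open Matrix Polynomial

noncomputable def SPoly (F : Type*) [Field F] : ℕ → Polynomial F
  | 0 => 1
  | 1 => Polynomial.X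
  | (n+2) => Polynomial.X * SPoly F (n+1) - SPoly F n

lemma SPoly_md (F : Type*) [Field F] :
    ∀ n, (SPoly F n).Monic ∧ (SPoly F n).natDegree = n := by
  have key : ∀ n, ((SPoly F n).Monic ∧ (SPoly F n).natDegree = n) ∧
      ((SPoly F (n+1)).Monic ∧ (SPoly F (n+1)).natDegree = n+1) := by
    intro n
    induction n with
    | zero => refine ⟨⟨monic_one, natDegree_one⟩, monic_X, natDegree_X⟩
    | succ m ih =>
      obtain ⟨h1, h2⟩ := ih
      refine ⟨h2, ?_⟩
      have hmul : (Polynomial.X * SPoly F (m+1)).Monic := monic_X.mul h2.1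
      have hdeg : (Polynomial.X * SPoly F (m+1)).natDegree = m + 2 := by
        rw [(monic_X (R := F)).natDegree_mul h2.1, natDegree_X, h2.2]; omega
      have hlt : (SPoly F m).degree < (Polynomial.X * SPoly F (m+1)).degree := by
        rw [Polynomial.degree_eq_natDegree hmul.ne_zero, hdeg]
        calc (SPoly F m).degree ≤ (SPoly F m).natDegree := degree_le_natDegree
        _ = (m : WithBot ℕ) := by rw [h1.2]
        _ < ((m + 2 : ℕ) : WithBot ℕ) := by exact_mod_cast by omega
      constructor
      · show (Polynomial.X * SPoly F (m+1) - SPoly F m).Monic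
        exact hmul.sub_of_left hlt
      · show (Polynomial.X * SPoly F (m+1) - SPoly F m).natDegree = m + 2
        rw [natDegree_sub_eq_left_of_natDegree_lt, hdeg]
        rw [hdeg, h1.2]; omega
  exact fun n => (key n).1

lemma SPoly_eval (F : Type*) [Field F] (u : Fˣ) :
    ∀ n, ((u : F) - ((u⁻¹ : Fˣ) : F)) * (SPoly F n).eval ((u : F) + ((u⁻¹ : Fˣ) : F))
      = ((u ^ (n+1) : Fˣ) : F) - ((u⁻¹ ^ (n+1) : Fˣ) : F) := by
  set x : F := (u : F)
  set z : F := ((u⁻¹ : Fˣ) : F)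
  have hxz : x * z = 1 := by
    rw [show x * z = ((u * u⁻¹ : Fˣ) : F) from rfl, mul_inv_cancel, Units.val_one]
  have key : ∀ n, ((x - z) * (SPoly F n).eval (x + z) = x ^ (n+1) - z ^ (n+1)) ∧
      ((x - z) * (SPoly F (n+1)).eval (x + z) = x ^ (n+2) - z ^ (n+2)) := by
    intro n
    induction n with
    | zero =>
      constructor
      · simp [SPoly]
      · simp only [SPoly, eval_X]; ring
    | succ m ih =>
      obtain ⟨h1, h2⟩ := ih
      refine ⟨h2, ?_⟩
      show (x - z) * (Polynomial.X * SPoly F (m+1) - SPoly F m).eval (x + z) = _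
      rw [eval_sub, eval_mul, eval_X]
      linear_combination (x + z) * h2 - h1 + (x ^ (m+1) - z ^ (m+1)) * hxz
  intro n
  have := (key n).1
  rw [Units.val_pow_eq_pow_val, Units.val_pow_eq_pow_val]
  exact this

lemma prod_pairs {M : Type*} [CommMonoid M] (N : ℕ) (f : Fin N → M) :
    ∏ i : Fin N, ∏ j ∈ Finset.Ioi i, (f i * f j) = ∏ i : Fin N, f i ^ (N - 1) := by
  have h1 : ∏ i : Fin N, ∏ j ∈ Finset.Ioi i, (f i * f j)
      = (∏ i : Fin N, f i ^ (Finset.Ioi i).card) * ∏ i : Fin N, ∏ j ∈ Finset.Ioi i, f j := by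
    rw [← Finset.prod_mul_distrib]
    exact Finset.prod_congr rfl fun i _ => by rw [Finset.prod_mul_distrib, Finset.prod_const]
  have h2 : ∏ i : Fin N, ∏ j ∈ Finset.Ioi i, f j
      = ∏ j : Fin N, f j ^ (Finset.Iio j).card := by
    rw [Finset.prod_comm' (s := Finset.univ) (t := fun i => Finset.Ioi i)
      (t' := Finset.univ) (s' := fun j => Finset.Iio j) (fun x y => by simp [and_comm])]
    exact Finset.prod_congr rfl fun j _ => Finset.prod_const _
  rw [h1, h2, ← Finset.prod_mul_distrib]
  refine Finset.prod_congr rfl fun i _ => ?_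
  rw [Fin.card_Ioi, Fin.card_Iio, ← pow_add]
  congr 1
  have := i.2
  omega

lemma weyl_denom {F : Type*} [Field F] (N : ℕ) (x : Fin N → Fˣ) :
    det (of fun j k : Fin N =>
        ((x j ^ ((k : ℕ) + 1) : Fˣ) : F) - (((x j)⁻¹ ^ ((k : ℕ) + 1) : Fˣ) : F))
      = (∏ j : Fin N, ∏ k ∈ Finset.Ioi j,
          ((x j : F) - (x k : F)) * (1 - (x j : F) * (x k : F))) *
        ∏ j : Fin N, ((x j : F) * (x j : F) - 1) * (((x j)⁻¹ : Fˣ) : F) ^ N := by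
  set v : Fin N → F := fun j => (x j : F) + (((x j)⁻¹ : Fˣ) : F) with hvdef
  set g : Fin N → F := fun j => (((x j)⁻¹ : Fˣ) : F) with hgdef
  set c : Fin N → F := fun j => (x j : F) - (((x j)⁻¹ : Fˣ) : F) with hcdef
  set s : Fin N → F := fun j => (x j : F) * (x j : F) - 1 with hsdef
  have hx : ∀ j, (x j : F) * g j = 1 := fun j => by
    rw [hgdef]
    rw [show (x j : F) * (((x j)⁻¹ : Fˣ) : F) = ((x j * (x j)⁻¹ : Fˣ) : F) from rfl,
      mul_inv_cancel, Units.val_one]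
  have hmat : (of fun j k : Fin N =>
        ((x j ^ ((k : ℕ) + 1) : Fˣ) : F) - (((x j)⁻¹ ^ ((k : ℕ) + 1) : Fˣ) : F))
      = of fun j k : Fin N => c j * (of fun j k : Fin N => (SPoly F (k : ℕ)).eval (v j)) j k := by
    ext j k
    simp only [of_apply]
    exact (SPoly_eval F (x j) (k : ℕ)).symm
  rw [hmat, det_mul_column]
  have hvdm : det (of fun j k : Fin N => (SPoly F (k : ℕ)).eval (v j))
      = ∏ i : Fin N, ∏ j ∈ Finset.Ioi i, (v j - v i) := by
    rw [← Matrix.det_eval_matrixOfPolynomials_eq_det_vandermonde v (fun k => SPoly F (k : ℕ))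
      (fun i => (SPoly_md F i).2) (fun i => (SPoly_md F i).1), Matrix.det_vandermonde]
  rw [hvdm]
  have hpair : ∀ i j : Fin N, v j - v i
      = (((x i : F) - (x j : F)) * (1 - (x i : F) * (x j : F))) * (g i * g j) := by
    intro i j
    have h1 := hx i
    have h2 := hx j
    simp only [hvdef, hgdef] at *
    linear_combination ((x i : F) - (x j : F) - (((x j)⁻¹ : Fˣ) : F)) * h1
      + ((x i : F) * (((x i)⁻¹ : Fˣ) : F) * ((x i : F) - (x j : F)) + (((x i)⁻¹ : Fˣ) : F)) * h2
  have hc : ∀ j, c j = s j * g j := by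
    intro j
    have h := hx j
    simp only [hcdef, hsdef]
    linear_combination (-(x j : F)) * h
  calc (∏ j, c j) * ∏ i : Fin N, ∏ j ∈ Finset.Ioi i, (v j - v i)
      = (∏ j, c j) * ∏ i : Fin N, ∏ j ∈ Finset.Ioi i,
          ((((x i : F) - (x j : F)) * (1 - (x i : F) * (x j : F))) * (g i * g j)) := by
        rw [Finset.prod_congr rfl fun i _ => Finset.prod_congr rfl fun j _ => hpair i j]
    _ = (∏ j, c j) * ((∏ i : Fin N, ∏ j ∈ Finset.Ioi i,
          (((x i : F) - (x j : F)) * (1 - (x i : F) * (x j : F)))) *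
          ∏ i : Fin N, ∏ j ∈ Finset.Ioi i, (g i * g j)) := by
        simp [Finset.prod_mul_distrib]
    _ = (∏ i : Fin N, ∏ j ∈ Finset.Ioi i,
          (((x i : F) - (x j : F)) * (1 - (x i : F) * (x j : F)))) *
          ((∏ j, c j) * ∏ j : Fin N, g j ^ (N - 1)) := by
        rw [prod_pairs]; ring
    _ = _ := by
        congr 1
        rw [← Finset.prod_mul_distrib]
        refine Finset.prod_congr rfl fun j _ => ?_
        rw [hc j]
        have hpow : g j * g j ^ (N - 1) = g j ^ N := by
          rw [← pow_succ']
          congr 1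
          have := j.2
          omega
        calc s j * g j * g j ^ (N-1) = s j * (g j * g j ^ (N-1)) := by ring
          _ = s j * g j ^ N := by rw [hpow]

lemma zpow_sum' {G : Type*} [CommGroup G] {ι : Type*} (a : G) (s : Finset ι) (f : ι → ℤ) :
    ∏ i ∈ s, a ^ f i = a ^ (∑ i ∈ s, f i) := by
  classical
  induction s using Finset.cons_induction with
  | empty => simp
  | cons i s hi ih => rw [Finset.prod_cons, Finset.sum_cons, ih, ← _root_.zpow_add]

theorem symplectic_theta_det {F : Type*} [Field F] (N : ℕ) (q r : Fˣ) (hr : r ^ 2 = q) :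
    (det (of fun j k : Fin N =>
        ((r ^ (((j : ℤ) - (k : ℤ)) ^ 2) : Fˣ) : F) -
          ((r ^ (((j : ℤ) + (k : ℤ) + 2) ^ 2) : Fˣ) : F)) =
      ((q ^ (∑ j ∈ Finset.range N, ((j : ℤ) + 1) ^ 2) : Fˣ) : F) *
        det (of fun j k : Fin N =>
          ((q ^ (-(((j : ℤ) + 1) * ((k : ℤ) + 1))) : Fˣ) : F) -
            ((q ^ (((j : ℤ) + 1) * ((k : ℤ) + 1)) : Fˣ) : F))) ∧
    det (of fun j k : Fin N =>
        ((q ^ (-(((j : ℤ) + 1) * ((k : ℤ) + 1))) : Fˣ) : F) -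
          ((q ^ (((j : ℤ) + 1) * ((k : ℤ) + 1)) : Fˣ) : F)) =
      (∏ j : Fin N, ∏ k ∈ Finset.Ioi j,
        (((q ^ (-((j : ℤ) + 1)) : Fˣ) : F) - ((q ^ (-((k : ℤ) + 1)) : Fˣ) : F)) *
          (1 - ((q ^ (-((j : ℤ) + 1) - ((k : ℤ) + 1)) : Fˣ) : F))) *
      ∏ j : Fin N,
        (((q ^ (-2 * ((j : ℤ) + 1)) : Fˣ) : F) - 1) *
          ((q ^ (((j : ℤ) + 1) * (N : ℤ)) : Fˣ) : F) := by
  have hq : ∀ z : ℤ, q ^ z = r ^ (2 * z) := fun z => by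
    rw [← hr, ← _root_.zpow_natCast r 2, ← _root_.zpow_mul]
    norm_num
  constructor
  · -- Part 1: row/column scaling
    have e1 : ∀ j k : Fin N, r ^ (((j : ℤ) - (k : ℤ)) ^ 2) =
        r ^ (((j : ℤ) + 1) ^ 2) * (r ^ (((k : ℤ) + 1) ^ 2) *
          q ^ (-(((j : ℤ) + 1) * ((k : ℤ) + 1)))) := by
      intro j k
      rw [hq, ← _root_.zpow_add, ← _root_.zpow_add]
      congr 1
      ring
    have e2 : ∀ j k : Fin N, r ^ (((j : ℤ) + (k : ℤ) + 2) ^ 2) =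
        r ^ (((j : ℤ) + 1) ^ 2) * (r ^ (((k : ℤ) + 1) ^ 2) *
          q ^ ((((j : ℤ) + 1) * ((k : ℤ) + 1)))) := by
      intro j k
      rw [hq, ← _root_.zpow_add, ← _root_.zpow_add]
      congr 1
      ring
    have hmat : (of fun j k : Fin N =>
        ((r ^ (((j : ℤ) - (k : ℤ)) ^ 2) : Fˣ) : F) -
          ((r ^ (((j : ℤ) + (k : ℤ) + 2) ^ 2) : Fˣ) : F))
        = of fun j k : Fin N => ((r ^ (((j : ℤ) + 1) ^ 2) : Fˣ) : F) *
            (of fun j k : Fin N => ((r ^ (((k : ℤ) + 1) ^ 2) : Fˣ) : F) *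
              (of fun j k : Fin N =>
                ((q ^ (-(((j : ℤ) + 1) * ((k : ℤ) + 1))) : Fˣ) : F) -
                  ((q ^ (((j : ℤ) + 1) * ((k : ℤ) + 1)) : Fˣ) : F)) j k) j k := by
      ext j k
      simp only [of_apply]
      rw [e1 j k, e2 j k]
      push_cast
      ring
    rw [hmat, det_mul_column, det_mul_row, ← mul_assoc]
    congr 1
    rw [← Finset.prod_mul_distrib]
    have : ∀ j : Fin N, ((r ^ (((j : ℤ) + 1) ^ 2) : Fˣ) : F) *
        ((r ^ (((j : ℤ) + 1) ^ 2) : Fˣ) : F) = ((q ^ (((j : ℤ) + 1) ^ 2) : Fˣ) : F) := by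
      intro j
      rw [← Units.val_mul, ← _root_.zpow_add, hq]
      congr 2
      ring
    rw [Finset.prod_congr rfl fun j _ => this j]
    have hcoe : ∏ j : Fin N, ((q ^ (((j : ℤ) + 1) ^ 2) : Fˣ) : F)
        = ((q ^ (∑ j : Fin N, ((j : ℤ) + 1) ^ 2) : Fˣ) : F) := by
      rw [← zpow_sum']
      exact (map_prod (Units.coeHom F) (fun j : Fin N => q ^ (((j : ℤ) + 1) ^ 2))
        Finset.univ).symm
    rw [hcoe, ← Fin.sum_univ_eq_sum_range (fun j => ((j : ℤ) + 1) ^ 2) N]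
  · -- Part 2: Weyl denominator factorization
    set x : Fin N → Fˣ := fun j => q ^ (-((j : ℤ) + 1)) with hxdef
    have hxinv : ∀ j, (x j)⁻¹ = q ^ ((j : ℤ) + 1) := fun j => by
      rw [hxdef]; simp only [_root_.zpow_neg, inv_inv]
    have e1 : ∀ j k : Fin N, q ^ (-(((j : ℤ) + 1) * ((k : ℤ) + 1))) = x j ^ ((k : ℕ) + 1) := by
      intro j k
      rw [hxdef, ← _root_.zpow_natCast (q ^ (-((j : ℤ) + 1))) ((k : ℕ) + 1), ← _root_.zpow_mul]
      congr 1
      all_goals (push_cast; ring)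
    have e2 : ∀ j k : Fin N, q ^ ((((j : ℤ) + 1) * ((k : ℤ) + 1))) = (x j)⁻¹ ^ ((k : ℕ) + 1) := by
      intro j k
      rw [hxinv, ← _root_.zpow_natCast (q ^ (((j : ℤ) + 1))) ((k : ℕ) + 1), ← _root_.zpow_mul]
      congr 1
      all_goals (push_cast; ring)
    have hmat : (of fun j k : Fin N =>
        ((q ^ (-(((j : ℤ) + 1) * ((k : ℤ) + 1))) : Fˣ) : F) -
          ((q ^ (((j : ℤ) + 1) * ((k : ℤ) + 1)) : Fˣ) : F))
        = of fun j k : Fin N =>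
            ((x j ^ ((k : ℕ) + 1) : Fˣ) : F) - (((x j)⁻¹ ^ ((k : ℕ) + 1) : Fˣ) : F) := by
      ext j k
      simp only [of_apply]
      rw [e1 j k, e2 j k]
    rw [hmat, weyl_denom N x]
    congr 1
    · refine Finset.prod_congr rfl fun j _ => Finset.prod_congr rfl fun k _ => ?_
      congr 2
      rw [← Units.val_mul, ← _root_.zpow_add]
      all_goals (congr 1; try ring)
    · refine Finset.prod_congr rfl fun j _ => ?_
      congr 1
      · congr 1
        rw [← Units.val_mul, ← _root_.zpow_add]
        congr 2
        ring
      · rw [hxinv, ← Units.val_pow_eq_pow_val, ← _root_.zpow_natCast (q ^ (((j : ℤ) + 1))) N,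
          ← _root_.zpow_mul]
end

section
/- Let λ = (1^{a_1} 2^{a_2} ⋯ M^{a_M}) be a partition with largest part M, and let λ̃ be the partition obtained by rotating by 180° the complement of λ in the M × (2N+M+1) rectangle, i.e. λ̃ = (1^{a_{M-1}} 2^{a_{M-2}} ⋯ (M-1)^{a_1} M^{2N+M+1−∑a_i}). Then sp_λ(x_1,…,x_N) = (−1)^{M(M+1)/2} · sp_{λ̃}(x_1,…,x_N). -/
/-!
Since `∏ xᵢ xᵢ⁻¹ = 1`, the product over the complement of an `m`-element set of the variables
`x, x⁻¹` is the product of the inverses over the set itself, so `e_{2N-m}(x, x⁻¹) = e_m(x⁻¹, x)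
= e_m(x, x⁻¹)`. Under `m ↦ 2N - m` the entry `e_{μ_j - j + k} - e_{μ_j - j - k}` of the matrix
of `λ̃` becomes minus the entry in row `M + 1 - j` of the matrix of `λ`; the sign `(-1)^M` of the
negation and the sign `(-1)^(M(M-1)/2)` of the row reversal multiply to `(-1)^(M(M+1)/2)`.
-/

open Matrix Finset

theorem Fin.sign_revPerm (n : ℕ) :
    Equiv.Perm.sign (Fin.revPerm : Equiv.Perm (Fin n)) = (-1) ^ n.choose 2 := by
  induction n with
  | zero => rfl
  | succ n ih =>
    have hdecomp : (Fin.revPerm : Equiv.Perm (Fin (n + 1))) =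
        Equiv.Perm.decomposeFin.symm (0, Fin.revPerm) * finRotate (n + 1) := by
      ext i
      induction i using Fin.lastCases with
      | last => simp
      | cast j =>
        have hrot : finRotate (n + 1) j.castSucc = j.succ := finRotate_of_lt j.isLt
        rw [Equiv.Perm.mul_apply, hrot, Equiv.Perm.decomposeFin_symm_apply_succ,
          Equiv.swap_self, Equiv.refl_apply]
        simp only [Fin.revPerm_apply, Fin.val_rev, Fin.val_castSucc, Fin.val_succ]
        omega
    rw [hdecomp, map_mul, Equiv.Perm.decomposeFin.symm_sign, if_pos rfl, one_mul, ih,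
      sign_finRotate, Nat.add_sub_cancel, Nat.choose_succ_succ', Nat.choose_one_right, pow_add,
      mul_comm]

theorem Matrix.det_neg_submatrix_rev {R : Type*} [CommRing R] {n : ℕ}
    (A : Matrix (Fin n) (Fin n) R) :
    det (-A.submatrix Fin.rev id) = (-1) ^ (n + 1).choose 2 * det A := by
  change det (-A.submatrix Fin.revPerm id) = _
  rw [det_neg, Fintype.card_fin, det_permute, Fin.sign_revPerm,
    Nat.choose_succ_succ', Nat.choose_one_right, pow_add, mul_assoc]
  push_cast
  simp

section Esymm

variable {R : Type*} [CommRing R]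

theorem Finset.esymm_card_sub_eq_prod_mul_esymm_inv {ι : Type*} [Fintype ι]
    (f : ι → Rˣ) {n : ℕ} (hn : n ≤ Fintype.card ι) :
    (univ.val.map fun i => (f i : R)).esymm (Fintype.card ι - n) =
      (∏ i, f i : Rˣ) * (univ.val.map fun i => (((f i)⁻¹ : Rˣ) : R)).esymm n := by
  classical
  rw [esymm_map_val, esymm_map_val, mul_sum]
  refine sum_nbij' (fun t => tᶜ) (fun t => tᶜ) ?_ ?_ (fun t _ => compl_compl t)
    (fun t _ => compl_compl t) ?_
  · intro t ht
    simp only [mem_powersetCard_univ, card_compl] at ht ⊢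
    omega
  · intro t ht
    simp only [mem_powersetCard_univ, card_compl] at ht ⊢
    omega
  · intro t _
    have hsplit : ∏ i ∈ t, f i = (∏ i, f i) * ∏ i ∈ tᶜ, (f i)⁻¹ := by
      rw [← prod_mul_prod_compl t f, prod_inv_distrib, mul_inv_cancel_right]
    simpa only [Units.val_mul, Units.coe_prod] using congrArg Units.val hsplit

theorem Multiset.esymm_card_sub_of_eq_map_add_map_inv {ι : Type*} [Fintype ι] (x : ι → Rˣ)
    {s : Multiset R}
    (hs : s = (univ.val.map fun i => (x i : R)) + univ.val.map fun i => (((x i)⁻¹ : Rˣ) : R))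
    {n : ℕ} (hn : n ≤ card s) :
    s.esymm (card s - n) = s.esymm n := by
  set y : ι ⊕ ι → Rˣ := Sum.elim x fun i => (x i)⁻¹
  have hs_y : s = univ.val.map fun i => (y i : R) :=
    hs.trans (Multiset.map_disjSum (s := (univ : Finset ι).val) (t := univ.val)
      fun i => (y i : R)).symm
  have hs_inv : s = univ.val.map fun i => (((y i)⁻¹ : Rˣ) : R) := by
    refine hs.trans ((Multiset.map_disjSum (s := (univ : Finset ι).val) (t := univ.val)
      fun i => (((y i)⁻¹ : Rˣ) : R)).trans ?_).symm
    simp [y, add_comm]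
  have hprod : ∏ i, y i = 1 := by simp [y, Fintype.prod_sum_type]
  have hcard : card s = Fintype.card (ι ⊕ ι) := by rw [hs_y]; simp
  rw [hcard] at hn ⊢
  simpa [← hs_y, ← hs_inv, hprod] using esymm_card_sub_eq_prod_mul_esymm_inv y hn

namespace Multiset

theorem esymm_eq_zero_of_card_lt (s : Multiset R) {n : ℕ} (hn : card s < n) : s.esymm n = 0 := by
  rw [esymm, powersetCard_eq_empty n hn, map_zero, sum_zero]

def esymmInt (s : Multiset R) (m : ℤ) : R :=
  if 0 ≤ m then s.esymm m.toNat else 0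

theorem esymmInt_card_sub {s : Multiset R}
    (hsymm : ∀ n ≤ card s, s.esymm (card s - n) = s.esymm n) (m : ℤ) :
    s.esymmInt (card s - m) = s.esymmInt m := by
  unfold esymmInt
  by_cases hm : 0 ≤ m
  · by_cases hms : m ≤ card s
    · rw [if_pos (by omega), if_pos hm, ← hsymm m.toNat (by omega)]
      congr 1
      omega
    · rw [if_neg (by omega), if_pos hm, esymm_eq_zero_of_card_lt s (by omega)]
  · rw [if_pos (by omega), if_neg hm, esymm_eq_zero_of_card_lt s (by omega)]

end Multiset

end Esymm

section JacobiTrudi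

variable {R : Type*} [CommRing R] {M : ℕ}

/-- The matrix `(e_{μ_j - j + k} - e_{μ_j - j - k})_{j,k=1}^M` of `sp_λ` (`μ = λ'`), reindexed
from `0`, which turns `μ_j - j - k` into `μ_j - j - k - 2`. -/
def spJacobiTrudi (E : ℤ → R) (μ : Fin M → ℤ) : Matrix (Fin M) (Fin M) R :=
  of fun j k => E (μ j - j + k) - E (μ j - j - k - 2)

theorem spJacobiTrudi_complement {E : ℤ → R} {d : ℤ} (hE : ∀ m, E (d - m) = E m)
    {μ μ' : Fin M → ℤ} (hμ : ∀ j, μ' j = d + M + 1 - μ j.rev) :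
    spJacobiTrudi E μ' = -(spJacobiTrudi E μ).submatrix Fin.rev id := by
  ext j k
  have hrev : ((j.rev : ℕ) : ℤ) = M - 1 - j := by
    rw [Fin.val_rev]; have := j.isLt; omega
  rw [neg_apply, submatrix_apply, id_eq]
  simp only [spJacobiTrudi, of_apply]
  rw [← hE (μ' j - j + k), ← hE (μ' j - j - k - 2), hμ, hrev]
  ring_nf

theorem det_spJacobiTrudi_complement {E : ℤ → R} {d : ℤ} (hE : ∀ m, E (d - m) = E m)
    {μ μ' : Fin M → ℤ} (hμ : ∀ j, μ' j = d + M + 1 - μ j.rev) :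
    det (spJacobiTrudi E μ') = (-1) ^ (M + 1).choose 2 * det (spJacobiTrudi E μ) := by
  rw [spJacobiTrudi_complement hE hμ, det_neg_submatrix_rev]

end JacobiTrudi

theorem sp_rectangle_complement_rotation {R : Type*} [CommRing R] (N M : ℕ)
    (x : Fin N → Rˣ)
    (a : Fin M → ℕ)
    (hsum : ∑ i, a i ≤ 2 * N + M + 1)
    (s : Multiset R)
    (hs : s = (Finset.univ.val.map fun i : Fin N => (x i : R)) +
        (Finset.univ.val.map fun i : Fin N => (((x i)⁻¹ : Rˣ) : R)))
    (E : ℤ → R) (hE : ∀ m : ℤ, E m = if 0 ≤ m then s.esymm m.toNat else 0)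
    (lamc lamtc : Fin M → ℕ)
    (hlamc : ∀ j : Fin M, lamc j = ∑ i ∈ Finset.univ.filter (fun i : Fin M => j ≤ i), a i)
    (hlamtc : ∀ j : Fin M, lamtc j = 2 * N + M + 1 - lamc (Fin.rev j)) :
    det (of fun j k : Fin M =>
        E ((lamc j : ℤ) - (j : ℤ) + (k : ℤ)) - E ((lamc j : ℤ) - (j : ℤ) - (k : ℤ) - 2)) =
      (-1) ^ (M * (M + 1) / 2) *
        det (of fun j k : Fin M =>
          E ((lamtc j : ℤ) - (j : ℤ) + (k : ℤ)) -
            E ((lamtc j : ℤ) - (j : ℤ) - (k : ℤ) - 2)) := by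
  have hcard : Multiset.card s = 2 * N := by simp [hs, two_mul]
  have hE_symm : ∀ m, E (2 * N - m) = E m := by
    obtain rfl : E = s.esymmInt := funext hE
    intro m
    have := s.esymmInt_card_sub (fun n hn => s.esymm_card_sub_of_eq_map_add_map_inv x hs hn) m
    rwa [hcard, Nat.cast_mul, Nat.cast_ofNat] at this
  have hlamtc' : ∀ j, (lamtc j : ℤ) = 2 * N + M + 1 - lamc j.rev := by
    intro j
    have hle : lamc j.rev ≤ 2 * N + M + 1 :=
      hlamc j.rev ▸ (sum_le_sum_of_subset (filter_subset _ _)).trans hsum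
    rw [hlamtc]; push_cast [hle]; ring
  change det (spJacobiTrudi E _) = _ * det (spJacobiTrudi E _)
  rw [det_spJacobiTrudi_complement (μ := fun j => (lamc j : ℤ)) hE_symm hlamtc',
    Nat.choose_two_right, Nat.add_sub_cancel, mul_comm (M + 1), ← mul_assoc, ← pow_add, Even.neg_one_pow ⟨_, rfl⟩, one_mul]
end
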